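/- Eager scope means minimal scope: if G₁ and G₂ are λ-ho-term-graphs with the same underlying term graph, and G₁ is eager-scope, then for every vertex w the abstraction prefix of w in G₁ is at most as long as the abstraction prefix of w in G₂, i.e., |P₁(w)| ≤ |P₂(w)|. -/

import Mathlib

/-- A (root-connected) term graph over signature `Sig` with arity function `ar`,
    with vertex type `V`. -/
structure TermGraph (Sig : Type) (ar : Sig → ℕ) (V : Type) where
  lab : V → Sig
  args : V → List V
  root : V
  arity_ok : ∀ v, (args v).length = ar (lab v)
  rooted : ∀ v, Relation.ReflTransGen (fun a b => b ∈ args a) root v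

/-- `R` is a bisimulation between term graphs `G₁` and `G₂`. -/
def IsBisim {Sig : Type} {ar : Sig → ℕ} {V₁ V₂ : Type}
    (G₁ : TermGraph Sig ar V₁) (G₂ : TermGraph Sig ar V₂)
    (R : V₁ → V₂ → Prop) : Prop :=
  R G₁.root G₂.root ∧
  (∀ v w, R v w → G₁.lab v = G₂.lab w) ∧
  (∀ v w, R v w → List.Forall₂ R (G₁.args v) (G₂.args w))

/-- `G₁` and `G₂` are bisimilar. -/
def Bisim {Sig : Type} {ar : Sig → ℕ} {V₁ V₂ : Type}
    (G₁ : TermGraph Sig ar V₁) (G₂ : TermGraph Sig ar V₂) : Prop :=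
  ∃ R, IsBisim G₁ G₂ R

/-- `h` is a homomorphism of term graphs: it maps root to root, preserves labels,
    and commutes with the argument function. -/
def IsHom {Sig : Type} {ar : Sig → ℕ} {V₁ V₂ : Type}
    (G₁ : TermGraph Sig ar V₁) (G₂ : TermGraph Sig ar V₂) (h : V₁ → V₂) : Prop :=
  h G₁.root = G₂.root ∧
  (∀ v, G₂.lab (h v) = G₁.lab v) ∧
  (∀ v, G₂.args (h v) = (G₁.args v).map h)

/-- There exists a functional bisimulation (homomorphism) from `G₁` to `G₂`. -/
def FunBisim {Sig : Type} {ar : Sig → ℕ} {V₁ V₂ : Type}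
    (G₁ : TermGraph Sig ar V₁) (G₂ : TermGraph Sig ar V₂) : Prop :=
  ∃ h, IsHom G₁ G₂ h

/-- The signature for lambda higher-order term graphs:
    application, abstraction, variable occurrence, black hole. -/
inductive HoSig : Type
  | app | lam | var | bh
deriving DecidableEq

/-- Arities for the higher-order lambda signature. -/
def arH : HoSig → ℕ
  | .app => 2
  | .lam => 1
  | .var => 1
  | .bh  => 0

/-- A correct abstraction-prefix function for a term graph over the higher-order
    lambda signature (the data of a lambda higher-order term graph). -/
structure CorrectPrefixHo {V : Type} (G : TermGraph HoSig arH V)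
    (P : V → List V) : Prop where
  root : P G.root = []
  blackhole : ∀ v, G.lab v = HoSig.bh → P v = []
  lamCond : ∀ w v, G.lab w = HoSig.lam → (G.args w)[0]? = some v →
    P v <+: P w ++ [w]
  appCond : ∀ w v (k : ℕ), G.lab w = HoSig.app → (G.args w)[k]? = some v →
    P v <+: P w
  varCond : ∀ w v, G.lab w = HoSig.var → (G.args w)[0]? = some v →
    G.lab v = HoSig.lam ∧ P v ++ [v] = P w

/-- Eager scope: for every vertex whose abstraction prefix ends in an abstraction
    vertex, there is a path to that abstraction vertex passing only through vertices
    whose prefixes extend the prefix of the starting vertex, whose last step goes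
    from a variable vertex to the abstraction vertex. -/
def EagerScope {V : Type} (G : TermGraph HoSig arH V) (P : V → List V) : Prop :=
  ∀ w p v, P w = p ++ [v] →
    ∃ ws : List V, ws.head? = some w ∧
      List.Chain' (fun a b => b ∈ G.args a) ws ∧
      (∀ u ∈ ws.tail, P w <+: P u) ∧
      ∃ wm, ws.getLast? = some wm ∧ G.lab wm = HoSig.var ∧
        (G.args wm)[0]? = some v

/-!
We show that `P₁ w` is even a sublist of `P₂ w`, by induction on the length of `P₁ w`. If `P₁ w`
ends in `v`, eager scope provides a path from `w` to a variable occurrence of `v` inside the scope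
of `v`; hence `P₁ w = P₁ v ++ [v]` and `v` does not lie on the path, because no vertex lies in its
own prefix. In `G₂` the variable occurrence has prefix `P₂ v ++ [v]`, and since prefixes grow by at
most the source vertex along an edge and `v` is off the path, `P₂ v ++ [v]` is a prefix of `P₂ w`.
-/

lemma TermGraph.getElem?_args_zero_of_mem {Sig : Type} {ar : Sig → ℕ} {V : Type}
    {G : TermGraph Sig ar V} {b c : V} (hc : c ∈ G.args b) (hb : ar (G.lab b) = 1) :
    (G.args b)[0]? = some c := by
  obtain ⟨k, hk⟩ := List.mem_iff_getElem?.mp hc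
  have hk1 : k < 1 := by
    rw [← hb, ← G.arity_ok]
    exact (List.getElem?_eq_some_iff.mp hk).1
  obtain rfl : k = 0 := by omega
  exact hk

namespace CorrectPrefixHo

variable {V : Type} {G : TermGraph HoSig arH V} {P : V → List V}

lemma prefix_append_of_mem_args (h : CorrectPrefixHo G P) {b c : V} (hc : c ∈ G.args b) :
    P c <+: P b ++ [b] := by
  cases hb : G.lab b with
  | app =>
    obtain ⟨k, hk⟩ := List.mem_iff_getElem?.mp hc
    exact (h.appCond b c k hb hk).trans (List.prefix_append _ [b])
  | lam => exact h.lamCond b c hb (G.getElem?_args_zero_of_mem hc (by rw [hb]; rfl))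
  | var =>
    have hbc := (h.varCond b c hb (G.getElem?_args_zero_of_mem hc (by rw [hb]; rfl))).2
    exact (hbc ▸ List.prefix_append (P c) [c]).trans (List.prefix_append _ _)
  | bh =>
    have := List.length_pos_of_mem hc
    rw [G.arity_ok, hb] at this
    exact absurd this (by decide)

lemma not_mem_self (h : CorrectPrefixHo G P) (v : V) : v ∉ P v := by
  suffices ∀ u, ∀ x ∈ P u, x ∉ P x from fun hv => this v v hv hv
  intro u
  induction G.rooted u with
  | refl => simp [h.root]
  | tail _ hbc ih =>
    intro x hx
    rcases List.mem_append.mp ((h.prefix_append_of_mem_args hbc).subset hx) with hx | hx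
    · exact ih x hx
    · obtain rfl := List.mem_singleton.mp hx
      exact fun hxx => ih x hxx hxx

/-- Along an edge `b → c` the prefix grows by at most `b`, so an entry of the prefix at the end of
a path that does not lie on the path was already in the prefix at its start. -/
lemma prefix_of_isChain (h : CorrectPrefixHo G P) {q : List V} {x : V} :
    ∀ {ws : List V} {a b : V}, ws.IsChain (fun a b => b ∈ G.args a) → ws.head? = some a →
      ws.getLast? = some b → P b = q ++ [x] → x ∉ ws → P b <+: P a
  | [], _, _, _, hhead, _, _, _ => by simp at hhead
  | [a], _, _, _, hhead, hlast, _, _ => by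
    obtain rfl := Option.some.inj hhead
    obtain rfl := Option.some.inj hlast
    exact List.prefix_refl _
  | a :: a' :: t, _, b, hchain, hhead, hlast, hb, hx => by
    obtain rfl := Option.some.inj hhead
    obtain ⟨hedge, hchain'⟩ := List.isChain_cons_cons.mp hchain
    have ih := h.prefix_of_isChain hchain' rfl (by simpa using hlast) hb
      (fun hx' => hx (List.mem_cons_of_mem _ hx'))
    rcases List.prefix_concat_iff.mp (ih.trans (h.prefix_append_of_mem_args hedge)) with hba | hba
    · have : [a] = [x] := List.append_inj_right' (hba.symm.trans hb) rfl
      exact absurd (List.mem_cons_self ..) (List.singleton_inj.mp this ▸ hx)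
    · exact hba

end CorrectPrefixHo

theorem EagerScope.sublist {V : Type} {G : TermGraph HoSig arH V} {P₁ P₂ : V → List V}
    (e₁ : EagerScope G P₁) (h₁ : CorrectPrefixHo G P₁) (h₂ : CorrectPrefixHo G P₂) (w : V) :
    (P₁ w).Sublist (P₂ w) := by
  obtain hw | ⟨p, v, hw⟩ := (P₁ w).eq_nil_or_concat'
  · simp [hw]
  obtain ⟨ws, hhead, hchain, htail, wm, hlast, hwm, hwmv⟩ := e₁ w p v hw
  have hv₁ := (h₁.varCond wm v hwm hwmv).2
  have hv₂ := (h₂.varCond wm v hwm hwmv).2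
  have hprefix : ∀ u ∈ ws, P₁ w <+: P₁ u := by
    obtain ⟨t, rfl⟩ := List.head?_eq_some_iff.mp hhead
    rintro u (_ | ⟨_, hu⟩)
    · exact List.prefix_refl _
    · exact htail u hu
  have hw₁ : P₁ w = P₁ v ++ [v] := by
    rcases List.prefix_concat_iff.mp (hv₁ ▸ hprefix wm (List.mem_of_mem_getLast? hlast)) with hpre | hpre
    · exact hpre
    · exact absurd (hpre.subset (by simp [hw])) (h₁.not_mem_self v)
  have hv : v ∉ ws := fun hv => h₁.not_mem_self v ((hprefix v hv).subset (by simp [hw]))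
  have hw₂ : P₂ v ++ [v] <+: P₂ w :=
    hv₂ ▸ h₂.prefix_of_isChain hchain hhead hlast hv₂.symm hv
  rw [hw₁]
  exact ((EagerScope.sublist e₁ h₁ h₂ v).append_right [v]).trans hw₂.sublist
termination_by (P₁ w).length
decreasing_by simp [hw₁]

/-- Eager scope means minimal scope: if two lambda higher-order term graphs share
    the same underlying term graph and the first one is eager-scope, then at every
    vertex its abstraction prefix is at most as long as that of the second one. -/
theorem eagerScope_minimal {V : Type} (G : TermGraph HoSig arH V)
    (P₁ P₂ : V → List V)
    (h₁ : CorrectPrefixHo G P₁) (h₂ : CorrectPrefixHo G P₂)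
    (e₁ : EagerScope G P₁) :
    ∀ w, (P₁ w).length ≤ (P₂ w).length :=
  fun w => (e₁.sublist h₁ h₂ w).length_le
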